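/- arXiv:2410.19152 — 6 statements merged into one kernel-verified Lean document; each statement's English description precedes it below -/
import Mathlib

section
/- Let ρ be a separable density matrix on ℂ^m ⊗ ℂ^n. Then for any indices w, y ∈ [m] and x, z ∈ [n], the entry of ρ satisfies |⟨w,x|ρ|y,z⟩| ≤ √(min(⟨w,x|ρ|w,x⟩, ⟨w,z|ρ|w,z⟩, ⟨y,x|ρ|y,x⟩, ⟨y,z|ρ|y,z⟩)), and moreover |⟨w,x|ρ|y,z⟩| ≤ (1/2)·min(⟨w,x|ρ|w,x⟩ + ⟨y,z|ρ|y,z⟩, ⟨w,z|ρ|w,z⟩ + ⟨y,x|ρ|y,x⟩). -/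
/-!
A separable state has a positive semidefinite partial transpose, since transposing the second
factor of a Kronecker product of positive semidefinite matrices keeps it positive semidefinite.
The entry `ρ (w, x) (y, z)` is also the entry `(w, z), (y, x)` of the partial transpose, so the
`2 × 2` principal minors of the two positive semidefinite matrices bound its modulus by both
`√(ρ_wx ρ_yz)` and `√(ρ_wz ρ_yx)`. Diagonal entries of a density matrix lie in `[0, 1]`, which
turns either product bound into a bound by each factor; AM-GM gives the second estimate.
-/

open scoped BigOperators ComplexOrder Kronecker
open Matrix

def MatIsSeparable {m n : Type*} [Fintype m] [Fintype n]
    (ρ : Matrix (m × n) (m × n) ℂ) : Prop :=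
  ∃ (k : ℕ) (p : Fin k → ℝ) (M : Fin k → Matrix m m ℂ) (N : Fin k → Matrix n n ℂ),
    (∀ i, 0 ≤ p i) ∧ (∑ i, p i = 1) ∧
    (∀ i, (M i).PosSemidef ∧ (M i).trace = 1) ∧
    (∀ i, (N i).PosSemidef ∧ (N i).trace = 1) ∧
    ρ = ∑ i, (p i : ℂ) • (M i ⊗ₖ N i)

namespace Matrix

namespace PosSemidef

variable {𝕜 n : Type*} [RCLike 𝕜] {A : Matrix n n 𝕜}

lemma re_apply_self_nonneg (hA : A.PosSemidef) (i : n) : 0 ≤ RCLike.re (A i i) :=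
  (RCLike.nonneg_iff.mp hA.diag_nonneg).1

lemma re_apply_self_le_re_trace [Fintype n] (hA : A.PosSemidef) (i : n) :
    RCLike.re (A i i) ≤ RCLike.re A.trace := by
  rw [trace, map_sum]
  exact Finset.single_le_sum (fun j _ ↦ hA.re_apply_self_nonneg j) (Finset.mem_univ i)

lemma norm_apply_le_sqrt_mul_sqrt (hA : A.PosSemidef) (i j : n) :
    ‖A i j‖ ≤ √(RCLike.re (A i i)) * √(RCLike.re (A j j)) := by
  have hdet := (hA.submatrix ![i, j]).det_nonneg
  rw [det_fin_two] at hdet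
  simp only [submatrix_apply, cons_val_zero, cons_val_one] at hdet
  rw [← hA.isHermitian.apply j i, ← hA.isHermitian.coe_re_apply_self i,
    ← hA.isHermitian.coe_re_apply_self j, RCLike.star_def, RCLike.mul_conj] at hdet
  norm_cast at hdet
  rw [← Real.sqrt_mul (hA.re_apply_self_nonneg i)]
  exact Real.le_sqrt_of_sq_le (by linarith [RCLike.ofReal_nonneg.mp hdet])

end PosSemidef

variable {R m n : Type*}

def partialTranspose (ρ : Matrix (m × n) (m × n) R) : Matrix (m × n) (m × n) R :=
  of fun (a, b) (c, d) ↦ ρ (a, d) (c, b)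

@[simp]
lemma partialTranspose_apply (ρ : Matrix (m × n) (m × n) R) (a c : m) (b d : n) :
    ρ.partialTranspose (a, b) (c, d) = ρ (a, d) (c, b) :=
  rfl

lemma partialTranspose_sum_smul_kronecker [CommSemiring R] {ι : Type*} (s : Finset ι)
    (p : ι → R) (M : ι → Matrix m m R) (N : ι → Matrix n n R) :
    (∑ i ∈ s, p i • (M i ⊗ₖ N i)).partialTranspose = ∑ i ∈ s, p i • (M i ⊗ₖ (N i)ᵀ) := by
  ext ⟨a, b⟩ ⟨c, d⟩
  simp [sum_apply]

end Matrix

lemma MatIsSeparable.posSemidef_partialTranspose {m n : Type*} [Fintype m] [Fintype n]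
    {ρ : Matrix (m × n) (m × n) ℂ} (hρ : MatIsSeparable ρ) : ρ.partialTranspose.PosSemidef := by
  obtain ⟨k, p, M, N, hp, -, hM, hN, rfl⟩ := hρ
  rw [partialTranspose_sum_smul_kronecker]
  refine posSemidef_sum _ fun i _ ↦ ((hM i).1.kronecker (hN i).1.transpose).smul ?_
  exact_mod_cast hp i

lemma Real.sqrt_mul_sqrt_le_add_div_two {a b : ℝ} (ha : 0 ≤ a) (hb : 0 ≤ b) :
    √a * √b ≤ (a + b) / 2 := by
  have := two_mul_le_add_sq √a √b
  rw [Real.sq_sqrt ha, Real.sq_sqrt hb] at this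
  linarith

lemma Real.le_sqrt_of_le_sqrt_mul_sqrt {t a b : ℝ} (h : t ≤ √a * √b) (hb : b ≤ 1) : t ≤ √a :=
  h.trans (mul_le_of_le_one_right (Real.sqrt_nonneg a) (Real.sqrt_le_one.mpr hb))

/-- off-diagonal entries of a separable density matrix are controlled by its
diagonal entries. -/
theorem separable_offdiagonal_bounds
    (m n : ℕ)
    (ρ : Matrix (Fin m × Fin n) (Fin m × Fin n) ℂ)
    (hpsd : ρ.PosSemidef) (htr : ρ.trace = 1)
    (hsep : MatIsSeparable ρ)
    (w y : Fin m) (x z : Fin n) :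
    ‖ρ (w, x) (y, z)‖
      ≤ Real.sqrt (min (min (ρ (w, x) (w, x)).re ((ρ (w, z) (w, z)).re))
          (min ((ρ (y, x) (y, x)).re) ((ρ (y, z) (y, z)).re))) ∧
    ‖ρ (w, x) (y, z)‖
      ≤ (1 / 2) * min ((ρ (w, x) (w, x)).re + (ρ (y, z) (y, z)).re)
          ((ρ (w, z) (w, z)).re + (ρ (y, x) (y, x)).re) := by
  have hnonneg (a) : 0 ≤ (ρ a a).re := hpsd.re_apply_self_nonneg a
  have hle_one (a) : (ρ a a).re ≤ 1 := by
    simpa [htr] using hpsd.re_apply_self_le_re_trace a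
  have h14 : ‖ρ (w, x) (y, z)‖ ≤ √(ρ (w, x) (w, x)).re * √(ρ (y, z) (y, z)).re :=
    hpsd.norm_apply_le_sqrt_mul_sqrt (w, x) (y, z)
  have h23 : ‖ρ (w, x) (y, z)‖ ≤ √(ρ (w, z) (w, z)).re * √(ρ (y, x) (y, x)).re :=
    hsep.posSemidef_partialTranspose.norm_apply_le_sqrt_mul_sqrt (w, z) (y, x)
  refine ⟨?_, ?_⟩
  · simp only [Real.sqrt_monotone.map_min]
    refine le_min (le_min ?_ ?_) (le_min ?_ ?_)
    · exact Real.le_sqrt_of_le_sqrt_mul_sqrt h14 (hle_one _)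
    · exact Real.le_sqrt_of_le_sqrt_mul_sqrt h23 (hle_one _)
    · exact Real.le_sqrt_of_le_sqrt_mul_sqrt (h23.trans_eq (mul_comm _ _)) (hle_one _)
    · exact Real.le_sqrt_of_le_sqrt_mul_sqrt (h14.trans_eq (mul_comm _ _)) (hle_one _)
  · rw [mul_min_of_nonneg _ _ one_half_pos.le]
    refine le_min ?_ ?_
    · linarith [Real.sqrt_mul_sqrt_le_add_div_two (hnonneg (w, x)) (hnonneg (y, z))]
    · linarith [Real.sqrt_mul_sqrt_le_add_div_two (hnonneg (w, z)) (hnonneg (y, x))]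
end

section
/- Let β, δ ∈ ℂ^N be unit vectors (Σ_j |β_j|² = Σ_j |δ_j|² = 1), and let t = max_{j∈[N]} |β_j|·|δ_j|. Then Σ_{j∈[N]} |β_j|²·|δ_j|² ≤ 1 − 2t(1 − t). (This is the probability that measuring both states in the computational basis yields the same outcome.) -/
open Finset

/-!
Put `a j = |β_j|·|δ_j|`. By Cauchy–Schwarz `∑ a j ≤ 1`, and for any index `i` the remaining
terms are nonnegative, so `∑_{j ≠ i} a j² ≤ (∑_{j ≠ i} a j)² ≤ (1 - a i)²`. Hence
`∑ a j² ≤ a i² + (1 - a i)² = 1 - 2 a i (1 - a i)`; taking `i` to be a maximiser gives the bound.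
-/

theorem sum_mul_le_one_of_sum_sq_eq_one {ι : Type*} {s : Finset ι} {f g : ι → ℝ}
    (hf : ∑ i ∈ s, f i ^ 2 = 1) (hg : ∑ i ∈ s, g i ^ 2 = 1) :
    ∑ i ∈ s, f i * g i ≤ 1 := by
  simpa [hf, hg] using Real.sum_mul_le_sqrt_mul_sqrt s f g

theorem sum_sq_le_sq_add_sq_sum_sub {ι : Type*} [DecidableEq ι] {s : Finset ι} {a : ι → ℝ}
    {i : ι} (ha : ∀ j ∈ s, 0 ≤ a j) (hi : i ∈ s) :
    ∑ j ∈ s, a j ^ 2 ≤ a i ^ 2 + (∑ j ∈ s, a j - a i) ^ 2 := by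
  rw [← sum_erase_add s _ hi, ← sum_erase_eq_sub hi, add_comm]
  gcongr
  exact sum_sq_le_sq_sum_of_nonneg fun j hj => ha j (mem_of_mem_erase hj)

theorem sum_sq_le_one_sub_two_mul_mul_one_sub {ι : Type*} {s : Finset ι} {a : ι → ℝ} {i : ι}
    (ha : ∀ j ∈ s, 0 ≤ a j) (hsum : ∑ j ∈ s, a j ≤ 1) (hi : i ∈ s) :
    ∑ j ∈ s, a j ^ 2 ≤ 1 - 2 * a i * (1 - a i) := by
  classical
  calc ∑ j ∈ s, a j ^ 2 ≤ a i ^ 2 + (∑ j ∈ s, a j - a i) ^ 2 := sum_sq_le_sq_add_sq_sum_sub ha hi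
    _ ≤ a i ^ 2 + (1 - a i) ^ 2 := by
      gcongr
      exact sub_nonneg.2 (single_le_sum ha hi)
    _ = 1 - 2 * a i * (1 - a i) := by ring

/-- for unit vectors `β, δ ∈ ℂ^N` with `t = max_j |β_j|·|δ_j|`, the collision
probability satisfies `Σ_j |β_j|²·|δ_j|² ≤ 1 − 2t(1 − t)`. -/
theorem collision_probability_bound
    (N : ℕ) (β δ : Fin N → ℂ)
    (hβ : ∑ j, ‖β j‖ ^ 2 = 1)
    (hδ : ∑ j, ‖δ j‖ ^ 2 = 1)
    (t : ℝ)
    (ht : IsGreatest (Set.range fun j => ‖β j‖ * ‖δ j‖) t) :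
    ∑ j, ‖β j‖ ^ 2 * ‖δ j‖ ^ 2 ≤ 1 - 2 * t * (1 - t) := by
  obtain ⟨j₀, rfl⟩ := ht.1
  have hsum : ∑ j, ‖β j‖ * ‖δ j‖ ≤ 1 := sum_mul_le_one_of_sum_sq_eq_one hβ hδ
  simpa only [mul_pow] using
    sum_sq_le_one_sub_two_mul_mul_one_sub (fun j _ => by positivity) hsum (mem_univ j₀)
end

section
/- Fix integers R ≥ 1 and κ ≥ 2, and let a be the amplitude function of a unit vector ψ in ℂ^R ⊗ (ℂ^κ ⊗ ℂ^R) ⊗ ℂ^κ as in the tripartite setup, with ρ_{BC} separable. Let w_D = |(1/√(Rκ))·Σ_{v,c} a_{vc,vc}|² be the Density success probability and w_M = Σ_{v,c} |a_{vc,vc}|² the MatchCheck success probability of ψ. If w_D ≥ 1/κ, then (w_D − 1/κ)² + (κ + 1)·w_M ≤ κ + 1. -/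
open scoped BigOperators ComplexOrder Kronecker
open Matrix

/-- The reduced density matrix on registers `B = ℂ^κ ⊗ ℂ^R` and `C = ℂ^κ`, obtained by
tracing out register `A` from the tripartite pure state with amplitudes `a`:
`⟨c,v,d| ρ_BC |e,w,f⟩ = Σ_x a_{xc,vd} · conj(a_{xe,wf})`. -/
noncomputable def rhoBC {R κ : ℕ} (a : (Fin R × Fin κ) × (Fin R × Fin κ) → ℂ) :
    Matrix ((Fin κ × Fin R) × Fin κ) ((Fin κ × Fin R) × Fin κ) ℂ :=
  Matrix.of fun p q =>
    ∑ x : Fin R, a ((x, p.1.1), (p.1.2, p.2)) * (starRingEnd ℂ) (a ((x, q.1.1), (q.1.2, q.2)))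

/-!
Separability forces `w_D ≤ 1/κ`, so the hypothesis pins `w_D = 1/κ` and the claim reduces to
`w_M ≤ 1`, which holds because `ψ` is a unit vector.

For the bound on `w_D`: by Cauchy–Schwarz and dropping off-diagonal terms,
`|Σ_{v,c} a_{vc,vc}|² ≤ R · Σ_{v,x} |Σ_c a_{xc,vc}|²`, and the double sum is the linear functional
`Σ_v ⟨Φ_v|ρ_BC|Φ_v⟩` with `Φ_v = Σ_c |c,v⟩|c⟩`. On a product state `CᴴC ⊗ DᴴD` this functional
equals `Σ_{k,l,v} |Σ_c C_{k,(c,v)} D_{l,c}|²`, which Cauchy–Schwarz bounds by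
`tr(CᴴC) · tr(DᴴD) = 1`; by linearity the bound passes to convex combinations.
-/

open scoped MatrixOrder in
lemma Matrix.PosSemidef.exists_eq_conjTranspose_mul_self {n : Type*} [Fintype n] [DecidableEq n]
    {M : Matrix n n ℂ} (hM : M.PosSemidef) : ∃ C : Matrix n n ℂ, M = Cᴴ * C :=
  CStarAlgebra.nonneg_iff_eq_star_mul_self.mp hM.nonneg

lemma Matrix.trace_conjTranspose_mul_self_eq_sum_norm_sq {m n : Type*} [Fintype m] [Fintype n]
    (C : Matrix m n ℂ) : (Cᴴ * C).trace = ((∑ k, ∑ p, ‖C k p‖ ^ 2 : ℝ) : ℂ) := by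
  simp only [trace, diag_apply, mul_apply, conjTranspose_apply, Complex.star_def,
    Complex.conj_mul', Complex.ofReal_sum, Complex.ofReal_pow]
  exact Finset.sum_comm

lemma sum_norm_sq_sum_mul_le {ι ν : Type*} [Fintype ι] [Fintype ν] (x : ι × ν → ℂ) (y : ι → ℂ) :
    ∑ v, ‖∑ c, x (c, v) * y c‖ ^ 2 ≤ (∑ p, ‖x p‖ ^ 2) * ∑ c, ‖y c‖ ^ 2 := by
  have hv : ∀ v, ‖∑ c, x (c, v) * y c‖ ^ 2 ≤ (∑ c, ‖x (c, v)‖ ^ 2) * ∑ c, ‖y c‖ ^ 2 := fun v =>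
    calc ‖∑ c, x (c, v) * y c‖ ^ 2 ≤ (∑ c, ‖x (c, v)‖ * ‖y c‖) ^ 2 := by
          gcongr
          exact (norm_sum_le _ _).trans_eq (by simp only [norm_mul])
      _ ≤ _ := Finset.sum_mul_sq_le_sq_mul_sq _ _ _
  calc _ ≤ ∑ v, (∑ c, ‖x (c, v)‖ ^ 2) * ∑ c, ‖y c‖ ^ 2 := Finset.sum_le_sum fun v _ => hv v
    _ = _ := by rw [← Finset.sum_mul, Fintype.sum_prod_type, Finset.sum_comm]

lemma sum_sum_comm_sum_sum {α β γ δ M : Type*} [Fintype α] [Fintype β] [Fintype γ] [Fintype δ]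
    [AddCommMonoid M] (f : α → β → γ → δ → M) :
    ∑ a, ∑ b, ∑ c, ∑ d, f a b c d = ∑ c, ∑ d, ∑ a, ∑ b, f a b c d := by
  calc _ = ∑ p : α × β, ∑ q : γ × δ, f p.1 p.2 q.1 q.2 := by simp only [Fintype.sum_prod_type]
    _ = ∑ q : γ × δ, ∑ p : α × β, f p.1 p.2 q.1 q.2 := Finset.sum_comm
    _ = _ := by simp only [Fintype.sum_prod_type]

lemma sum_diag_le_sum {α : Type*} [Fintype α] {f : α × α → ℝ} (hf : ∀ p, 0 ≤ f p) :
    ∑ q, f (q, q) ≤ ∑ p, f p := by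
  rw [← Finset.sum_diag]
  exact Finset.sum_le_univ_sum_of_nonneg hf

section MatchedOverlap

variable {ι ν : Type*} [Fintype ι] [Fintype ν]

/-- `Σ_v ⟨Φ_v| ρ |Φ_v⟩` for the unnormalised vectors `Φ_v = Σ_c |c, v⟩ ⊗ |c⟩`. -/
noncomputable def matchedOverlap : Matrix ((ι × ν) × ι) ((ι × ν) × ι) ℂ →ₗ[ℂ] ℂ :=
  ∑ v, ∑ c, ∑ d, entryLinearMap ℂ ℂ ((c, v), c) ((d, v), d)

lemma matchedOverlap_apply (ρ : Matrix ((ι × ν) × ι) ((ι × ν) × ι) ℂ) :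
    matchedOverlap ρ = ∑ v, ∑ c, ∑ d, ρ ((c, v), c) ((d, v), d) := by
  simp only [matchedOverlap, LinearMap.coe_sum, Finset.sum_apply, entryLinearMap_apply]

lemma matchedOverlap_gram_kronecker_gram {m n : Type*} [Fintype m] [Fintype n]
    (C : Matrix m (ι × ν) ℂ) (D : Matrix n ι ℂ) :
    matchedOverlap ((Cᴴ * C) ⊗ₖ (Dᴴ * D))
      = ((∑ k, ∑ l, ∑ v, ‖∑ c, C k (c, v) * D l c‖ ^ 2 : ℝ) : ℂ) := by
  have hv : ∀ v, ∑ c, ∑ d, (Cᴴ * C) (c, v) (d, v) * (Dᴴ * D) c d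
      = ∑ k, ∑ l, ((‖∑ c, C k (c, v) * D l c‖ ^ 2 : ℝ) : ℂ) := fun v => by
    simp only [mul_apply, conjTranspose_apply, Complex.star_def, Complex.ofReal_pow,
      ← Complex.conj_mul', map_sum, map_mul, Finset.sum_mul_sum]
    rw [sum_sum_comm_sum_sum]
    simp only [mul_mul_mul_comm]
  simp only [matchedOverlap_apply, kroneckerMap_apply, hv, Complex.ofReal_sum]
  rw [Finset.sum_comm]
  exact Finset.sum_congr rfl fun _ _ => Finset.sum_comm

lemma re_matchedOverlap_kronecker_le_one [DecidableEq ι] [DecidableEq ν]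
    {M : Matrix (ι × ν) (ι × ν) ℂ} {N : Matrix ι ι ℂ}
    (hM : M.PosSemidef) (hMtr : M.trace = 1) (hN : N.PosSemidef) (hNtr : N.trace = 1) :
    (matchedOverlap (M ⊗ₖ N)).re ≤ 1 := by
  obtain ⟨C, rfl⟩ := hM.exists_eq_conjTranspose_mul_self
  obtain ⟨D, rfl⟩ := hN.exists_eq_conjTranspose_mul_self
  rw [trace_conjTranspose_mul_self_eq_sum_norm_sq] at hMtr hNtr
  norm_cast at hMtr hNtr
  rw [matchedOverlap_gram_kronecker_gram, Complex.ofReal_re]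
  calc _ ≤ ∑ k, ∑ l, (∑ p, ‖C k p‖ ^ 2) * ∑ c, ‖D l c‖ ^ 2 := by
        gcongr with k _ l _
        exact sum_norm_sq_sum_mul_le (C k) (D l)
    _ = 1 := by rw [← Finset.sum_mul_sum, hMtr, hNtr, one_mul]

lemma re_matchedOverlap_le_one_of_matIsSeparable [DecidableEq ι] [DecidableEq ν]
    {ρ : Matrix ((ι × ν) × ι) ((ι × ν) × ι) ℂ} (hρ : MatIsSeparable ρ) :
    (matchedOverlap ρ).re ≤ 1 := by
  obtain ⟨k, p, M, N, hp, hp_sum, hM, hN, rfl⟩ := hρ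
  simp only [map_sum, map_smul, smul_eq_mul, Complex.re_sum, Complex.re_ofReal_mul]
  calc _ ≤ ∑ i, p i * 1 := by
        gcongr with i _
        · exact hp i
        · exact re_matchedOverlap_kronecker_le_one (hM i).1 (hM i).2 (hN i).1 (hN i).2
    _ = 1 := by simpa using hp_sum

end MatchedOverlap

lemma matchedOverlap_rhoBC {R κ : ℕ} (a : (Fin R × Fin κ) × (Fin R × Fin κ) → ℂ) :
    matchedOverlap (rhoBC a) = ((∑ v, ∑ x, ‖∑ c, a ((x, c), (v, c))‖ ^ 2 : ℝ) : ℂ) := by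
  simp only [matchedOverlap_apply, rhoBC, of_apply, Complex.ofReal_sum, Complex.ofReal_pow,
    ← Complex.mul_conj', map_sum, Finset.sum_mul_sum]
  exact Finset.sum_congr rfl fun v _ =>
    (Finset.sum_congr rfl fun _ _ => Finset.sum_comm).trans Finset.sum_comm

lemma norm_sum_diag_sq_le_of_matIsSeparable {R κ : ℕ} (a : (Fin R × Fin κ) × (Fin R × Fin κ) → ℂ)
    (hsep : MatIsSeparable (rhoBC a)) : ‖∑ v : Fin R, ∑ c : Fin κ, a ((v, c), (v, c))‖ ^ 2 ≤ R := by
  have hT : ∑ v, ∑ x, ‖∑ c, a ((x, c), (v, c))‖ ^ 2 ≤ 1 := by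
    simpa only [matchedOverlap_rhoBC, Complex.ofReal_re] using
      re_matchedOverlap_le_one_of_matIsSeparable hsep
  calc _ ≤ (∑ v, ‖∑ c, a ((v, c), (v, c))‖) ^ 2 := by gcongr; exact norm_sum_le _ _
    _ ≤ R * ∑ v, ‖∑ c, a ((v, c), (v, c))‖ ^ 2 := by
        simpa using sq_sum_le_card_mul_sum_sq (s := Finset.univ)
          (f := fun v => ‖∑ c, a ((v, c), (v, c))‖)
    _ ≤ R * ∑ v, ∑ x, ‖∑ c, a ((x, c), (v, c))‖ ^ 2 := by
        gcongr with v _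
        exact Finset.single_le_sum (f := fun x => ‖∑ c, a ((x, c), (v, c))‖ ^ 2)
          (fun _ _ => by positivity) (Finset.mem_univ v)
    _ ≤ R := mul_le_of_le_one_right (Nat.cast_nonneg R) hT

theorem density_matchcheck_tradeoff_general
    (R κ : ℕ)
    (a : (Fin R × Fin κ) × (Fin R × Fin κ) → ℂ)
    (hnorm : ∑ p : (Fin R × Fin κ) × (Fin R × Fin κ), ‖a p‖ ^ 2 = 1)
    (hsep : MatIsSeparable (rhoBC a))
    (wD wM : ℝ)
    (hwD : wD = ‖(Real.sqrt (R * κ) : ℂ)⁻¹ *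
        ∑ v : Fin R, ∑ c : Fin κ, a ((v, c), (v, c))‖ ^ 2)
    (hwM : wM = ∑ v : Fin R, ∑ c : Fin κ, ‖a ((v, c), (v, c))‖ ^ 2)
    (hge : 1 / κ ≤ wD) :
    (wD - 1 / κ) ^ 2 + (κ + 1) * wM ≤ κ + 1 := by
  have hwD_le : wD ≤ 1 / κ := by
    rw [hwD, norm_mul, norm_inv, Complex.norm_real, Real.norm_of_nonneg (Real.sqrt_nonneg _),
      mul_pow, inv_pow, Real.sq_sqrt (by positivity), inv_mul_eq_div, ← div_div]
    exact div_le_div_of_nonneg_right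
      (div_le_one_of_le₀ (norm_sum_diag_sq_le_of_matIsSeparable a hsep) R.cast_nonneg) κ.cast_nonneg
  have hwM_le : wM ≤ 1 := by
    rw [hwM, ← hnorm, ← Fintype.sum_prod_type']
    exact sum_diag_le_sum (f := fun p => ‖a p‖ ^ 2) fun _ => by positivity
  rw [le_antisymm hwD_le hge, sub_self, zero_pow two_ne_zero, zero_add]
  exact mul_le_of_le_one_right (by positivity) hwM_le

/-- the tradeoff between the success probabilities of the `Density` test
(`w_D`) and the `MatchCheck` test (`w_M`): if `w_D ≥ 1/κ` then
`(w_D − 1/κ)² + (κ+1)·w_M ≤ κ+1`. -/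
theorem density_matchcheck_tradeoff
    (R κ : ℕ) (hR : 1 ≤ R) (hκ : 2 ≤ κ)
    (a : (Fin R × Fin κ) × (Fin R × Fin κ) → ℂ)
    (hnorm : ∑ p : (Fin R × Fin κ) × (Fin R × Fin κ), ‖a p‖ ^ 2 = 1)
    (hsep : MatIsSeparable (rhoBC a))
    (wD wM : ℝ)
    (hwD : wD = ‖(Real.sqrt (R * κ) : ℂ)⁻¹ *
        ∑ v : Fin R, ∑ c : Fin κ, a ((v, c), (v, c))‖ ^ 2)
    (hwM : wM = ∑ v : Fin R, ∑ c : Fin κ, ‖a ((v, c), (v, c))‖ ^ 2)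
    (hge : 1 / κ ≤ wD) :
    (wD - 1 / κ) ^ 2 + (κ + 1) * wM ≤ κ + 1 :=
  density_matchcheck_tradeoff_general R κ a hnorm hsep wD wM hwD hwM hge
end

section
/- Let ρ₁ and ρ₂ be density matrices on ℂ^n, let p₁ be the largest eigenvalue of ρ₁ and q₁ the largest eigenvalue of ρ₂, and suppose p₁·q₁ = 1 − ε with 0 ≤ ε < 1/3. Then Tr[ρ₁ ρ₂] ≤ 1 − ε + ε². Equivalently, the SWAP test on ρ₁ ⊗ ρ₂ accepts with probability (1/2)(1 + Tr[ρ₁ρ₂]) ≤ 1 − ε/2 + ε²/2. -/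
open scoped BigOperators ComplexOrder
open Matrix

/-!
Diagonalise `ρ₂ = ∑ⱼ qⱼ vⱼvⱼ*` and put `aⱼ = ⟨vⱼ, ρ₁ vⱼ⟩`. The `aⱼ` form a probability vector
bounded by `p₁` (as `ρ₁ ≤ p₁ • 1`), so with `q₁ = q_{j₀}` and `a = a_{j₀} ≤ p₁`,
`Tr[ρ₁ρ₂] = ∑ⱼ qⱼ aⱼ ≤ q₁ a + (1 - q₁)(1 - a) ≤ p₁ q₁ + (1 - p₁)(1 - q₁)`, the last step because
`q₁ ≥ p₁ q₁ > 1/2`. Finally `1 - p₁` and `1 - q₁` are both at most `1 - p₁ q₁ = ε`.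
-/

lemma sum_mul_le_mul_add_mul_compl {ι : Type*} [Fintype ι] [DecidableEq ι] {q a : ι → ℝ}
    (hq : ∀ j, 0 ≤ q j) (hq1 : ∑ j, q j = 1) (ha : ∀ j, 0 ≤ a j) (ha1 : ∑ j, a j = 1)
    (j₀ : ι) :
    ∑ j, q j * a j ≤ q j₀ * a j₀ + (1 - q j₀) * (1 - a j₀) := by
  have hq_rest : ∀ j ∈ Finset.univ.erase j₀, q j ≤ 1 - q j₀ := fun j hj => by
    rw [← hq1, ← Finset.add_sum_erase _ _ (Finset.mem_univ j₀), add_sub_cancel_left]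
    exact Finset.single_le_sum (fun k _ => hq k) hj
  have ha_rest : ∑ j ∈ Finset.univ.erase j₀, a j = 1 - a j₀ := by
    rw [← ha1, ← Finset.add_sum_erase _ _ (Finset.mem_univ j₀), add_sub_cancel_left]
  rw [← Finset.add_sum_erase _ _ (Finset.mem_univ j₀), ← ha_rest, Finset.mul_sum]
  gcongr with j hj
  · exact ha j
  · exact hq_rest j hj

namespace Matrix

lemma PosSemidef.re_diag_conjTranspose_mul_mul_nonneg {𝕜 m n : Type*} [RCLike 𝕜] [Fintype m]
    [Fintype n] {A : Matrix n n 𝕜} (hA : A.PosSemidef) (B : Matrix n m 𝕜) (j : m) :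
    0 ≤ RCLike.re ((Bᴴ * A * B) j j) :=
  (RCLike.nonneg_iff.mp (hA.conjTranspose_mul_mul_same B).diag_nonneg).1

variable {𝕜 n : Type*} [RCLike 𝕜] [Fintype n] [DecidableEq n]

lemma IsHermitian.sum_eigenvalues_eq_re_trace {A : Matrix n n 𝕜} (hA : A.IsHermitian) :
    ∑ i, hA.eigenvalues i = RCLike.re A.trace := by
  simp only [hA.trace_eq_sum_eigenvalues, map_sum, RCLike.ofReal_re]

lemma PosSemidef.eigenvalues_mem_Icc_of_trace_eq_one {A : Matrix n n 𝕜} (hA : A.PosSemidef)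
    (htr : A.trace = 1) (i : n) : hA.1.eigenvalues i ∈ Set.Icc 0 1 := by
  refine ⟨hA.eigenvalues_nonneg i, ?_⟩
  rw [← RCLike.one_re (K := 𝕜), ← htr, ← hA.1.sum_eigenvalues_eq_re_trace]
  exact Finset.single_le_sum (fun j _ => hA.eigenvalues_nonneg j) (Finset.mem_univ i)

lemma trace_star_mul_mul_unitary (V : unitaryGroup n 𝕜) (A : Matrix n n 𝕜) :
    (star (V : Matrix n n 𝕜) * A * V).trace = A.trace := by
  rw [trace_mul_cycle, Unitary.mul_star_self_of_mem V.2, one_mul]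

lemma trace_mul_diagonal (A : Matrix n n 𝕜) (d : n → 𝕜) :
    (A * diagonal d).trace = ∑ j, d j * A j j := by
  simp [trace, mul_diagonal, mul_comm]

lemma IsHermitian.trace_mul_eq_sum {B : Matrix n n 𝕜} (hB : B.IsHermitian) (A : Matrix n n 𝕜) :
    (A * B).trace = ∑ j, (hB.eigenvalues j : 𝕜) *
      (star (hB.eigenvectorUnitary : Matrix n n 𝕜) * A * hB.eigenvectorUnitary) j j := by
  conv_lhs => rw [hB.spectral_theorem, Unitary.conjStarAlgAut_apply]
  rw [← mul_assoc, ← mul_assoc, trace_mul_cycle, ← mul_assoc, trace_mul_diagonal]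
  rfl

open scoped MatrixOrder in
lemma IsHermitian.re_diag_star_mul_mul_le {A : Matrix n n 𝕜} (hA : A.IsHermitian) {c : ℝ}
    (hc : ∀ i, hA.eigenvalues i ≤ c) (V : unitaryGroup n 𝕜) (j : n) :
    RCLike.re ((star (V : Matrix n n 𝕜) * A * V) j j) ≤ c := by
  have hAc : A ≤ algebraMap ℝ _ c := by
    rw [le_algebraMap_iff_spectrum_le hA.isSelfAdjoint, hA.spectrum_real_eq_range_eigenvalues]
    rintro _ ⟨i, rfl⟩
    exact hc i
  have hconj := star_left_conjugate_le_conjugate hAc (V : Matrix n n 𝕜)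
  rw [Algebra.algebraMap_eq_smul_one, mul_smul_comm, mul_one, smul_mul_assoc,
    Unitary.star_mul_self_of_mem V.2, le_iff] at hconj
  have hdiag := (RCLike.nonneg_iff.mp (hconj.diag_nonneg (i := j))).1
  rw [sub_apply, smul_apply, one_apply_eq, map_sub, RCLike.smul_re, RCLike.one_re, mul_one]
    at hdiag
  linarith

theorem re_trace_mul_le_of_eigenvalues {ρ₁ ρ₂ : Matrix n n 𝕜}
    (h₁ : ρ₁.PosSemidef) (htr₁ : ρ₁.trace = 1) (h₂ : ρ₂.PosSemidef) (htr₂ : ρ₂.trace = 1)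
    {p : ℝ} (hp : ∀ i, h₁.1.eigenvalues i ≤ p) {j₀ : n} (hq : 1 / 2 ≤ h₂.1.eigenvalues j₀) :
    RCLike.re (ρ₁ * ρ₂).trace ≤
      p * h₂.1.eigenvalues j₀ + (1 - p) * (1 - h₂.1.eigenvalues j₀) := by
  set V := h₂.1.eigenvectorUnitary
  set q := h₂.1.eigenvalues
  set a : n → ℝ := fun j => RCLike.re ((star (V : Matrix n n 𝕜) * ρ₁ * V) j j)
  have htrace : RCLike.re (ρ₁ * ρ₂).trace = ∑ j, q j * a j := by
    simp only [h₂.1.trace_mul_eq_sum, map_sum, RCLike.re_ofReal_mul, q, a, V]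
  have hq1 : ∑ j, q j = 1 := by
    rw [h₂.1.sum_eigenvalues_eq_re_trace, htr₂, RCLike.one_re]
  have ha1 : ∑ j, a j = 1 := by
    calc ∑ j, a j = RCLike.re (star (V : Matrix n n 𝕜) * ρ₁ * V).trace := by
          simp only [trace, diag_apply, map_sum, a]
      _ = 1 := by rw [trace_star_mul_mul_unitary, htr₁, RCLike.one_re]
  have ha_le : a j₀ ≤ p := h₁.1.re_diag_star_mul_mul_le hp V j₀
  calc RCLike.re (ρ₁ * ρ₂).trace ≤ q j₀ * a j₀ + (1 - q j₀) * (1 - a j₀) :=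
        htrace ▸ sum_mul_le_mul_add_mul_compl h₂.eigenvalues_nonneg hq1
          (h₁.re_diag_conjTranspose_mul_mul_nonneg (V : Matrix n n 𝕜)) ha1 j₀
    _ ≤ p * q j₀ + (1 - p) * (1 - q j₀) := by nlinarith

end Matrix

theorem swap_test_acceptance_bound_general
    (n : ℕ)
    (ρ₁ ρ₂ : Matrix (Fin n) (Fin n) ℂ)
    (h₁ : ρ₁.PosSemidef) (htr₁ : ρ₁.trace = 1)
    (h₂ : ρ₂.PosSemidef) (htr₂ : ρ₂.trace = 1)
    (p₁ q₁ : ℝ)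
    (hp₁ : IsGreatest (Set.range h₁.isHermitian.eigenvalues) p₁)
    (hq₁ : IsGreatest (Set.range h₂.isHermitian.eigenvalues) q₁)
    (ε : ℝ) (hε : ε < 1 / 3)
    (hpq : p₁ * q₁ = 1 - ε) :
    ((ρ₁ * ρ₂).trace).re ≤ 1 - ε + ε ^ 2 ∧
    (1 / 2) * (1 + ((ρ₁ * ρ₂).trace).re) ≤ 1 - ε / 2 + ε ^ 2 / 2 := by
  obtain ⟨⟨i₀, hi₀⟩, hp_max⟩ := hp₁
  obtain ⟨j₀, hj₀⟩ := hq₁.1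
  obtain ⟨hp0, hp1⟩ := hi₀ ▸ h₁.eigenvalues_mem_Icc_of_trace_eq_one htr₁ i₀
  obtain ⟨hq0, hq1⟩ := hj₀ ▸ h₂.eigenvalues_mem_Icc_of_trace_eq_one htr₂ j₀
  have hq_half : 1 / 2 ≤ q₁ := by nlinarith
  have hbound : ((ρ₁ * ρ₂).trace).re ≤ p₁ * q₁ + (1 - p₁) * (1 - q₁) :=
    hj₀ ▸ Matrix.re_trace_mul_le_of_eigenvalues h₁ htr₁ h₂ htr₂
      (fun i => hp_max ⟨i, rfl⟩) (hj₀ ▸ hq_half)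
  have hp_gap : 1 - p₁ ≤ ε := by nlinarith
  have hq_gap : 1 - q₁ ≤ ε := by nlinarith
  have hcompl : (1 - p₁) * (1 - q₁) ≤ ε ^ 2 := sq ε ▸
    mul_le_mul hp_gap hq_gap (sub_nonneg.2 hq1) ((sub_nonneg.2 hq1).trans hq_gap)
  constructor <;> linarith

/-- if the largest eigenvalues `p₁, q₁` of density matrices `ρ₁, ρ₂` satisfy
`p₁·q₁ = 1 − ε` with `0 ≤ ε < 1/3`, then `Tr[ρ₁ρ₂] ≤ 1 − ε + ε²`; equivalently the SWAP
test accepts with probability at most `1 − ε/2 + ε²/2`. -/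
theorem swap_test_acceptance_bound
    (n : ℕ)
    (ρ₁ ρ₂ : Matrix (Fin n) (Fin n) ℂ)
    (h₁ : ρ₁.PosSemidef) (htr₁ : ρ₁.trace = 1)
    (h₂ : ρ₂.PosSemidef) (htr₂ : ρ₂.trace = 1)
    (p₁ q₁ : ℝ)
    (hp₁ : IsGreatest (Set.range h₁.isHermitian.eigenvalues) p₁)
    (hq₁ : IsGreatest (Set.range h₂.isHermitian.eigenvalues) q₁)
    (ε : ℝ) (hε0 : 0 ≤ ε) (hε : ε < 1 / 3)
    (hpq : p₁ * q₁ = 1 - ε) :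
    ((ρ₁ * ρ₂).trace).re ≤ 1 - ε + ε ^ 2 ∧
    (1 / 2) * (1 + ((ρ₁ * ρ₂).trace).re) ≤ 1 - ε / 2 + ε ^ 2 / 2 :=
  swap_test_acceptance_bound_general n ρ₁ ρ₂ h₁ htr₁ h₂ htr₂ p₁ q₁ hp₁ hq₁ ε hε hpq
end

section
/- Let ψ be a unit vector in ℂ^{d_A} ⊗ ℂ^{d_B}. Suppose ψ is 2-extendable with respect to the second factor: there exists a density matrix σ on ℂ^{d_A} ⊗ ℂ^{d_B} ⊗ ℂ^{d_B} that is invariant under the unitary swapping the two ℂ^{d_B} factors and satisfies Tr_{B₂}[σ] = ψψ† (tracing out the third factor). Then ψ is a product vector, ψ = u ⊗ v for unit vectors u ∈ ℂ^{d_A}, v ∈ ℂ^{d_B}. Conversely, every pure product state is 2-extendable. -/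
/-!
If the marginal `Tr_K σ = ψψ†` of a positive semidefinite `σ` is pure, then for every `a ⊥ ψ`
the quadratic forms of `σ` at the vectors `a ⊗ e_k` sum to `⟨a, ψψ† a⟩ = 0`, so these vectors
lie in the kernel of `σ`; together with hermiticity this forces `σ = ψψ† ⊗ E`. For a
swap-invariant extension, tracing out the last factor in the swapped picture then gives
`ψψ† = Tr_B(ψψ†) ⊗ E`, and a vector whose projector is a Kronecker product is itself a product
vector. Conversely `ψψ† ⊗ vv†` is a swap-invariant extension of `ψ = u ⊗ v`.
-/

open scoped ComplexOrder Kronecker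
open Matrix

namespace Matrix

variable {𝕜 X K : Type*} [RCLike 𝕜] [Fintype X] [Fintype K]

def traceRight (σ : Matrix (X × K) (X × K) 𝕜) : Matrix X X 𝕜 :=
  of fun p q => ∑ k, σ (p, k) (q, k)

omit [Fintype X] in
theorem traceRight_kronecker (A : Matrix X X 𝕜) (B : Matrix K K 𝕜) :
    traceRight (A ⊗ₖ B) = B.trace • A := by
  ext p q
  simp [traceRight, trace, Finset.mul_sum, mul_comm]

theorem sum_star_dotProduct_mulVec_indicator [DecidableEq K] (σ : Matrix (X × K) (X × K) 𝕜)
    (a : X → 𝕜) :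
    ∑ k, star (fun x : X × K => if x.2 = k then a x.1 else 0) ⬝ᵥ
        σ *ᵥ (fun x => if x.2 = k then a x.1 else 0) =
      star a ⬝ᵥ traceRight σ *ᵥ a := by
  simp only [dotProduct, mulVec, Fintype.sum_prod_type, traceRight, of_apply, Pi.star_apply,
    apply_ite star, star_zero, ite_mul, zero_mul, mul_ite, mul_zero, Finset.sum_ite_eq',
    Finset.mem_univ, if_true]
  rw [Finset.sum_comm]
  refine Finset.sum_congr rfl fun p _ => ?_
  rw [← Finset.mul_sum]
  simp only [Finset.sum_mul]
  rw [Finset.sum_comm]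

variable {σ : Matrix (X × K) (X × K) 𝕜}

theorem PosSemidef.mulVec_indicator_eq_zero [DecidableEq K] (hσ : σ.PosSemidef) {a : X → 𝕜}
    (ha : star a ⬝ᵥ traceRight σ *ᵥ a = 0) (k : K) :
    σ *ᵥ (fun x => if x.2 = k then a x.1 else 0) = 0 := by
  rw [← sum_star_dotProduct_mulVec_indicator] at ha
  have hk := (Finset.sum_eq_zero_iff_of_nonneg fun k _ => hσ.dotProduct_mulVec_nonneg _).1 ha k
    (Finset.mem_univ k)
  exact (hσ.dotProduct_mulVec_zero_iff _).1 hk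

theorem PosSemidef.apply_eq_star_mul_sum_of_traceRight_eq (hσ : σ.PosSemidef) {ψ : X → 𝕜}
    (hψ : star ψ ⬝ᵥ ψ = 1) (h : traceRight σ = vecMulVec ψ (star ψ)) (x : X × K) (q : X) (l : K) :
    σ x (q, l) = star (ψ q) * ∑ q', σ x (q', l) * ψ q' := by
  classical
  set a : X → 𝕜 := Pi.single q 1 - star (ψ q) • ψ
  have hψa : star ψ ⬝ᵥ a = 0 := by
    simp [a, dotProduct_sub, dotProduct_smul, hψ]
  have hker := congrFun (hσ.mulVec_indicator_eq_zero
    (by rw [h, vecMulVec_mulVec, hψa]; simp) l) x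
  simp only [mulVec, dotProduct, Fintype.sum_prod_type, mul_ite, mul_zero, Finset.sum_ite_eq',
    Finset.mem_univ, if_true, a, Pi.sub_apply, Pi.smul_apply, smul_eq_mul, mul_sub,
    Finset.sum_sub_distrib, Pi.single_apply, mul_one, Pi.zero_apply] at hker
  rw [Finset.mul_sum, ← sub_eq_zero, ← hker]
  congr 1
  exact Finset.sum_congr rfl fun q' _ => by ring

theorem PosSemidef.exists_eq_vecMulVec_kronecker_of_traceRight_eq (hσ : σ.PosSemidef)
    {ψ : X → 𝕜} (hψ : star ψ ⬝ᵥ ψ = 1) (h : traceRight σ = vecMulVec ψ (star ψ)) :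
    ∃ E : Matrix K K 𝕜, σ = vecMulVec ψ (star ψ) ⊗ₖ E := by
  have col := hσ.apply_eq_star_mul_sum_of_traceRight_eq hψ h
  have row (p : X) (k : K) (y : X × K) :
      σ (p, k) y = ψ p * ∑ p', star (ψ p') * σ (p', k) y := by
    rw [← hσ.1.apply (p, k) y, col, star_mul', star_star, star_sum]
    congr 1
    exact Finset.sum_congr rfl fun p' _ => by rw [star_mul', hσ.1.apply, mul_comm]
  refine ⟨of fun k l => ∑ p', ∑ q', star (ψ p') * σ (p', k) (q', l) * ψ q', ?_⟩
  ext ⟨p, k⟩ ⟨q, l⟩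
  simp_rw [row p k, col _ q l, kroneckerMap_apply, vecMulVec_apply, of_apply, Pi.star_apply,
    Finset.mul_sum]
  exact Finset.sum_congr rfl fun p' _ => Finset.sum_congr rfl fun q' _ => by ring

theorem vecMulVec_eq_traceRight_kronecker_of_swap_invariant {A B : Type*} [Fintype B]
    {σ : Matrix ((A × B) × B) ((A × B) × B) 𝕜} {ψ : A × B → 𝕜} {E : Matrix B B 𝕜}
    (hσ : σ = vecMulVec ψ (star ψ) ⊗ₖ E)
    (hswap : ∀ (i i' : A) (j j' k k' : B),
      σ ((i, j), k) ((i', j'), k') = σ ((i, k), j) ((i', k'), j'))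
    (h : traceRight σ = vecMulVec ψ (star ψ)) :
    vecMulVec ψ (star ψ) = traceRight (vecMulVec ψ (star ψ)) ⊗ₖ E := by
  ext ⟨i, j⟩ ⟨i', j'⟩
  calc vecMulVec ψ (star ψ) (i, j) (i', j') = ∑ k, σ ((i, j), k) ((i', j'), k) := by
        rw [← h]; rfl
    _ = ∑ k, σ ((i, k), j) ((i', k), j') := Finset.sum_congr rfl fun k _ => hswap ..
    _ = _ := by simp [hσ, traceRight, Finset.sum_mul]

end Matrix

section ProductVectors

variable {𝕜 A B : Type*} [RCLike 𝕜]

theorem dotProduct_star_self_eq_sum_norm_sq [Fintype A] (ψ : A → 𝕜) :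
    star ψ ⬝ᵥ ψ = ((∑ i, ‖ψ i‖ ^ 2 : ℝ) : 𝕜) := by
  simp [dotProduct, RCLike.conj_mul]

theorem exists_eq_mul_of_vecMulVec_eq_kronecker (ψ : A × B → 𝕜) (F : Matrix A A 𝕜)
    (G : Matrix B B 𝕜) (h : vecMulVec ψ (star ψ) = F ⊗ₖ G) :
    ∃ (f : A → 𝕜) (g : B → 𝕜), ψ = fun p => f p.1 * g p.2 := by
  by_cases hψ : ψ = 0
  · exact ⟨0, 0, by simp [hψ]; rfl⟩
  obtain ⟨⟨i₀, j₀⟩, h₀⟩ := Function.ne_iff.mp hψ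
  refine ⟨fun i => F i i₀, fun j => G j j₀ / star (ψ (i₀, j₀)), ?_⟩
  funext ⟨i, j⟩
  have hij := congrFun (congrFun h (i, j)) (i₀, j₀)
  simp only [vecMulVec_apply, kroneckerMap_apply, Pi.star_apply] at hij
  rw [mul_div_assoc', ← hij, mul_div_cancel_right₀ _ (star_ne_zero.mpr h₀)]

theorem exists_normalized_eq_mul [Fintype A] [Fintype B] (f : A → 𝕜) (g : B → 𝕜)
    (h : ∑ p : A × B, ‖f p.1 * g p.2‖ ^ 2 = 1) :
    ∃ (u : A → 𝕜) (v : B → 𝕜), (∑ i, ‖u i‖ ^ 2 = 1) ∧ (∑ j, ‖v j‖ ^ 2 = 1) ∧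
      (fun p : A × B => f p.1 * g p.2) = fun p => u p.1 * v p.2 := by
  set F := ∑ i, ‖f i‖ ^ 2
  have hFG : F * ∑ j, ‖g j‖ ^ 2 = 1 := by
    rw [← h, Fintype.sum_prod_type, Finset.sum_mul_sum]
    simp [mul_pow]
  have hF : 0 < F := by
    refine lt_of_le_of_ne (by positivity) fun hF => ?_
    simp [← hF] at hFG
  set s := Real.sqrt F
  have hs : 0 < s := Real.sqrt_pos.mpr hF
  have hs2 : ‖(s : 𝕜)‖ ^ 2 = F := by
    rw [RCLike.norm_ofReal, abs_of_pos hs, Real.sq_sqrt hF.le]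
  refine ⟨fun i => f i / (s : 𝕜), fun j => (s : 𝕜) * g j, ?_, ?_, ?_⟩
  · simp_rw [norm_div, div_pow, hs2, ← Finset.sum_div]
    exact div_self hF.ne'
  · simp_rw [norm_mul, mul_pow, hs2, ← Finset.mul_sum]
    exact hFG
  · funext p
    field_simp [(RCLike.ofReal_ne_zero).mpr hs.ne']

end ProductVectors

/-- a pure bipartite state `ψ` is 2-extendable with respect to the second
factor if and only if `ψ` is a product vector. -/
theorem pure_two_extendable_iff_product
    (dA dB : ℕ)
    (ψ : Fin dA × Fin dB → ℂ)
    (hψ : ∑ p, ‖ψ p‖ ^ 2 = 1) :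
    (∃ σ : Matrix ((Fin dA × Fin dB) × Fin dB) ((Fin dA × Fin dB) × Fin dB) ℂ,
        σ.PosSemidef ∧ σ.trace = 1 ∧
        (∀ (i i' : Fin dA) (j j' k k' : Fin dB),
          σ ((i, j), k) ((i', j'), k') = σ ((i, k), j) ((i', k'), j')) ∧
        (Matrix.of fun p q => ∑ k : Fin dB, σ (p, k) (q, k))
          = Matrix.vecMulVec ψ (star ψ)) ↔
    (∃ (u : Fin dA → ℂ) (v : Fin dB → ℂ),
        (∑ i, ‖u i‖ ^ 2 = 1) ∧
        (∑ j, ‖v j‖ ^ 2 = 1) ∧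
        ψ = fun p => u p.1 * v p.2) := by
  have hψ' : star ψ ⬝ᵥ ψ = 1 := by simp [dotProduct_star_self_eq_sum_norm_sq, hψ]
  constructor
  · rintro ⟨σ, hσ, -, hswap, hpt⟩
    obtain ⟨E, hE⟩ := hσ.exists_eq_vecMulVec_kronecker_of_traceRight_eq hψ' hpt
    obtain ⟨f, g, rfl⟩ := exists_eq_mul_of_vecMulVec_eq_kronecker ψ _ E
      (vecMulVec_eq_traceRight_kronecker_of_swap_invariant hE hswap hpt)
    exact exists_normalized_eq_mul f g hψ
  · rintro ⟨u, v, -, hv, hψuv⟩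
    have hv' : star v ⬝ᵥ v = 1 := by simp [dotProduct_star_self_eq_sum_norm_sq, hv]
    refine ⟨vecMulVec ψ (star ψ) ⊗ₖ vecMulVec v (star v),
      (posSemidef_vecMulVec_self_star ψ).kronecker (posSemidef_vecMulVec_self_star v), ?_, ?_, ?_⟩
    · rw [trace_kronecker, trace_vecMulVec, trace_vecMulVec, dotProduct_comm, hψ',
        dotProduct_comm, hv', one_mul]
    · intro i i' j j' k k'
      simp only [kroneckerMap_apply, vecMulVec_apply, Pi.star_apply, hψuv, star_mul']
      ring
    · change traceRight _ = _
      rw [traceRight_kronecker, trace_vecMulVec, dotProduct_comm, hv', one_smul]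
end

section
/- Let ρ be a real symmetric positive semidefinite n×n matrix with trace 1 and with all diagonal entries equal to 1/n. Let λ₁ be the largest eigenvalue of ρ and let a ∈ ℝ^n be a corresponding unit eigenvector. Then λ₁·a_i² ≤ 1/n for every i ∈ [n], and consequently Σ_{i=1}^n |1/n − λ₁·a_i²| = 1 − λ₁. -/
open scoped BigOperators
open Matrix

/-- The quadratic form of `ρ` at the test vector `e_i - a_i • a` equals `ρ_ii - λ a_i²`. -/
theorem Matrix.PosSemidef.mul_sq_le_diag_of_mulVec_eq_smul {ι : Type*} [Fintype ι]
    [DecidableEq ι] {ρ : Matrix ι ι ℝ} (hρ : ρ.PosSemidef) {lam : ℝ} {a : ι → ℝ}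
    (ha : ρ *ᵥ a = lam • a) (hunit : a ⬝ᵥ a = 1) (i : ι) : lam * a i ^ 2 ≤ ρ i i := by
  have hsymm : a ᵥ* ρ = lam • a := by
    rw [← ha, ← mulVec_transpose, show ρᵀ = ρ from hρ.isHermitian]
  set e : ι → ℝ := Pi.single i 1
  have hform : (e - a i • a) ⬝ᵥ ρ *ᵥ (e - a i • a) = ρ i i - lam * a i ^ 2 := by
    rw [mulVec_sub, mulVec_smul, ha, sub_dotProduct, dotProduct_sub, dotProduct_sub,
      smul_dotProduct (a i) a, dotProduct_mulVec a ρ e, hsymm]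
    simp only [e, single_one_dotProduct, dotProduct_single_one, mulVec_single_one, col_apply,
      smul_dotProduct, dotProduct_smul, hunit, Pi.smul_apply, smul_eq_mul]
    ring
  have hnonneg := hρ.dotProduct_mulVec_nonneg (e - a i • a)
  rw [star_trivial] at hnonneg
  linarith

theorem proper_state_eigenvector_bounds_general
    (n : ℕ) (hn : 0 < n)
    (ρ : Matrix (Fin n) (Fin n) ℝ)
    (hρ : ρ.PosSemidef)
    (hdiag : ∀ i, ρ i i = 1 / n)
    (lam : ℝ)
    (a : Fin n → ℝ)
    (ha : ρ.mulVec a = lam • a)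
    (hunit : ∑ i, a i ^ 2 = 1) :
    (∀ i, lam * a i ^ 2 ≤ 1 / n) ∧
    (∑ i, |1 / (n : ℝ) - lam * a i ^ 2| = 1 - lam) := by
  have hunit' : a ⬝ᵥ a = 1 := by simpa only [dotProduct, sq] using hunit
  have hle (i : Fin n) : lam * a i ^ 2 ≤ 1 / n :=
    hdiag i ▸ hρ.mul_sq_le_diag_of_mulVec_eq_smul ha hunit' i
  refine ⟨hle, ?_⟩
  calc ∑ i, |1 / (n : ℝ) - lam * a i ^ 2| = ∑ i, (1 / (n : ℝ) - lam * a i ^ 2) :=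
        Finset.sum_congr rfl fun i _ => abs_of_nonneg (sub_nonneg.2 (hle i))
    _ = 1 - lam := by
      rw [Finset.sum_sub_distrib, ← Finset.mul_sum, hunit, Finset.sum_const, Finset.card_fin,
        nsmul_eq_mul, mul_one_div_cancel (Nat.cast_ne_zero.2 hn.ne'), mul_one]

/-- for a real symmetric PSD matrix `ρ` with trace `1` and constant diagonal
`1/n`, if `λ₁` is its largest eigenvalue with real unit eigenvector `a`, then
`λ₁·a_i² ≤ 1/n` for every `i`, and `Σ_i |1/n − λ₁·a_i²| = 1 − λ₁`. -/
theorem proper_state_eigenvector_bounds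
    (n : ℕ) (hn : 0 < n)
    (ρ : Matrix (Fin n) (Fin n) ℝ)
    (hρ : ρ.PosSemidef) (htr : ρ.trace = 1)
    (hdiag : ∀ i, ρ i i = 1 / n)
    (lam : ℝ)
    (hlam : IsGreatest (Set.range hρ.isHermitian.eigenvalues) lam)
    (a : Fin n → ℝ)
    (ha : ρ.mulVec a = lam • a)
    (hunit : ∑ i, a i ^ 2 = 1) :
    (∀ i, lam * a i ^ 2 ≤ 1 / n) ∧
    (∑ i, |1 / (n : ℝ) - lam * a i ^ 2| = 1 - lam) :=
  proper_state_eigenvector_bounds_general n hn ρ hρ hdiag lam a ha hunit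
end
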